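/- arXiv:2010.15345 — 3 statements merged into one kernel-verified Lean document; each statement's English description precedes it below -/
import Mathlib

section
/- (Corollary 2.8) Suppose k = 0 and δ = 0 (so Υₙ = 1 and C(δ,n) = 1 for all n, and Df = f, Dg = g) and let f(z) = z + Σ_{n≥2} aₙ zⁿ belong to the class B_Σ(0, φ). Assume B₁² − (B₂−B₁) ≠ 0. Then |a₂| ≤ B₁·√B₁ / √( |B₁² − (B₂−B₁)| ) and |a₃| ≤ B₁/2 + B₁². -/
open Complex

noncomputable section

/-- The open unit disk in ℂ. -/
def unitDisk : Set ℂ := Metric.ball 0 1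

/-- Υₙ = (λ(α+β−1)(n−1))^k. -/
def Ups (lam al be : ℝ) (k n : ℕ) : ℝ := (lam * (al + be - 1) * ((n : ℝ) - 1)) ^ k

/-- C(δ,n) = Γ(n+δ)/(Γ(n)·Γ(δ+1)). -/
def Cdel (d : ℝ) (n : ℕ) : ℝ :=
  Real.Gamma ((n : ℝ) + d) / (Real.Gamma (n : ℝ) * Real.Gamma (d + 1))

/-- The operator D applied to a function with Taylor coefficients `a`
(where `a 0 = 0`, `a 1 = 1`): (Df)(z) = z + Σ_{n≥2} Υₙ·C(δ,n)·aₙ zⁿ. -/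
def Dop (lam al be d : ℝ) (k : ℕ) (a : ℕ → ℂ) : ℂ → ℂ := fun z =>
  z + ∑' n : ℕ, if 2 ≤ n then (Ups lam al be k n : ℂ) * (Cdel d n : ℂ) * a n * z ^ n else 0

/-- Subordination F ≺ G on the unit disk. -/
def Subord (F G : ℂ → ℂ) : Prop :=
  ∃ u : ℂ → ℂ, AnalyticOnNhd ℂ u unitDisk ∧ u 0 = 0 ∧
    (∀ z ∈ unitDisk, ‖u z‖ < 1) ∧ ∀ z ∈ unitDisk, F z = G (u z)

/-- z ↦ (z·F′(z)/F(z))·((F(z)/z)^γ), with the value 1 at the origin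
(principal-branch complex power). -/
def bazFun (g : ℝ) (F : ℂ → ℂ) : ℂ → ℂ := fun z =>
  if z = 0 then 1 else (z * deriv F z / F z) * ((F z / z) ^ (g : ℂ))

/-- `f` is analytic on the unit disk, normalized, with Taylor coefficients `a`
(`a 0 = 0`, `a 1 = 1`). -/
def IsInA (f : ℂ → ℂ) (a : ℕ → ℂ) : Prop :=
  AnalyticOnNhd ℂ f unitDisk ∧ a 0 = 0 ∧ a 1 = 1 ∧
    ∀ z ∈ unitDisk, HasSum (fun n => a n * z ^ n) (f z)

/-- Membership of `f` (with coefficients `a`, and inverse `g` with coefficients `b`)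
in the class B_Σ(γ, φ). -/
def MemB (lam al be d : ℝ) (k : ℕ) (g : ℝ) (φ : ℂ → ℂ)
    (f gf : ℂ → ℂ) (a b : ℕ → ℂ) : Prop :=
  IsInA f a ∧ Set.InjOn f unitDisk ∧
  IsInA gf b ∧ Set.InjOn gf unitDisk ∧
  (∀ w : ℂ, ‖w‖ < 1 / 4 → f (gf w) = w) ∧
  b 2 = -a 2 ∧ b 3 = 2 * a 2 ^ 2 - a 3 ∧
  (∀ z ∈ unitDisk, z ≠ 0 → Dop lam al be d k a z ≠ 0) ∧
  (∀ z ∈ unitDisk, z ≠ 0 → Dop lam al be d k b z ≠ 0) ∧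
  Subord (bazFun g (Dop lam al be d k a)) φ ∧
  Subord (bazFun g (Dop lam al be d k b)) φ

/-!
With `k = δ = γ = 0` the operator `D` is the identity on the disk, so the subordination says
`z f'(z) = φ(u(z)) f(z)` for a Schwarz function `u = c₁ z + c₂ z² + ⋯`. Comparing Taylor
coefficients at `0` (Leibniz rule on the left, Faà di Bruno on the right) gives
`a₂ = B₁ c₁` and `2 a₃ - a₂² = B₁ c₂ + B₂ c₁²`, and likewise for the inverse `g`, whose
coefficients are `-a₂` and `2 a₂² - a₃`. Adding and subtracting the two relations and using
`|c₂| ≤ 1 - |c₁|²` (Schwarz–Pick at the origin for `u(z)/z`) yields both bounds.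
-/

open Metric Filter Topology FormalMultilinearSeries
open scoped NNReal

theorem hasFPowerSeriesOnBall_ofScalars_of_hasSum {𝕜 : Type*} [RCLike 𝕜] {F : 𝕜 → 𝕜}
    {a : ℕ → 𝕜} {r : ℝ≥0} (hr : 0 < r)
    (h : ∀ z ∈ ball (0 : 𝕜) r, HasSum (fun n => a n * z ^ n) (F z)) :
    HasFPowerSeriesOnBall F (ofScalars 𝕜 a) 0 r where
  r_le := by
    refine ENNReal.le_of_forall_nnreal_lt fun s hs => (ofScalars 𝕜 a).le_radius_of_summable ?_
    have hs' : ((s : ℝ) : 𝕜) ∈ ball (0 : 𝕜) r := by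
      simpa [mem_ball_zero_iff] using hs
    simpa [ofScalars_norm, norm_mul, norm_pow] using (h _ hs').summable.norm
  r_pos := by simpa using hr
  hasSum {y} hy := by
    rw [Metric.eball_coe, mem_ball_zero_iff] at hy
    simpa [ofScalars_apply_eq, mul_comm] using h y (mem_ball_zero_iff.mpr hy)

theorem HasFPowerSeriesAt.iteratedDeriv_eq {𝕜 : Type*} [NontriviallyNormedField 𝕜]
    [CompleteSpace 𝕜] [CharZero 𝕜] {F : 𝕜 → 𝕜} {a : ℕ → 𝕜} {x : 𝕜}
    (hF : HasFPowerSeriesAt F (ofScalars 𝕜 a) x) (n : ℕ) :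
    iteratedDeriv n F x = n.factorial * a n := by
  have hcoeff := congrArg (fun p => p.coeff n)
    (hF.analyticAt.hasFPowerSeriesAt.eq_formalMultilinearSeries hF)
  simp only [coeff_ofScalars] at hcoeff
  rw [← hcoeff, mul_div_cancel₀ _ (Nat.cast_ne_zero.mpr n.factorial_ne_zero)]

section Leibniz

variable {𝕜 : Type*} [NontriviallyNormedField 𝕜] [CompleteSpace 𝕜]

theorem iteratedDeriv_succ_id_mul_zero {G : 𝕜 → 𝕜} (hG : AnalyticAt 𝕜 G 0) (n : ℕ) :
    iteratedDeriv (n + 1) (fun z => z * G z) 0 = (n + 1) * iteratedDeriv n G 0 := by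
  rw [iteratedDeriv_fun_mul (f := fun z => z) contDiffAt_id hG.contDiffAt,
    Finset.sum_eq_single 1 (fun i _ hi => by simp [iteratedDeriv_fun_id_zero, hi])
      (fun h => by simp at h)]
  simp [iteratedDeriv_fun_id_zero]

theorem deriv_eq_and_iteratedDeriv_two_eq_of_id_mul_deriv_eq [CharZero 𝕜] {F h : 𝕜 → 𝕜}
    {A : ℕ → 𝕜} (hF : HasFPowerSeriesAt F (ofScalars 𝕜 A) 0) (hA0 : A 0 = 0) (hA1 : A 1 = 1)
    (hh : AnalyticAt 𝕜 h 0) (heq : (fun z => z * deriv F z) =ᶠ[𝓝 0] fun z => h z * F z) :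
    deriv h 0 = A 2 ∧ iteratedDeriv 2 h 0 = 4 * A 3 - 2 * A 2 ^ 2 := by
  have hleibniz (n : ℕ) : (n + 1) * iteratedDeriv (n + 1) F 0 = ∑ i ∈ Finset.range (n + 2),
      (n + 1).choose i * iteratedDeriv i h 0 * iteratedDeriv (n + 1 - i) F 0 := by
    rw [iteratedDeriv_succ', ← iteratedDeriv_succ_id_mul_zero hF.analyticAt.deriv,
      heq.iteratedDeriv_eq, iteratedDeriv_fun_mul hh.contDiffAt hF.analyticAt.contDiffAt]
  have e1 := hleibniz 0
  have e2 := hleibniz 1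
  have e3 := hleibniz 2
  simp only [Finset.sum_range_succ, Finset.sum_range_zero, hF.iteratedDeriv_eq, hA0, hA1]
    at e1 e2 e3
  norm_num [Nat.choose, Nat.factorial] at e1 e2 e3
  have hd : deriv h 0 = A 2 := by linear_combination -e2 / 2 + A 2 * e1
  refine ⟨hd, ?_⟩
  linear_combination -e3 / 3 + 2 * A 3 * e1 - 2 * A 2 * hd

end Leibniz

theorem norm_sub_le_norm_one_sub_conj_mul {κ w : ℂ} (hκ : ‖κ‖ < 1) (hw : ‖w‖ ≤ 1) :
    ‖w - κ‖ ≤ ‖1 - starRingEnd ℂ κ * w‖ := by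
  have hid : Complex.normSq (1 - starRingEnd ℂ κ * w) - Complex.normSq (w - κ)
      = (1 - Complex.normSq w) * (1 - Complex.normSq κ) := by
    simp only [Complex.normSq_apply, Complex.sub_re, Complex.sub_im, Complex.mul_re,
      Complex.mul_im, Complex.conj_re, Complex.conj_im, Complex.one_re, Complex.one_im]
    ring
  have hw' : Complex.normSq w ≤ 1 := by
    rw [Complex.normSq_eq_norm_sq]; nlinarith [norm_nonneg w]
  have hκ' : Complex.normSq κ < 1 := by
    rw [Complex.normSq_eq_norm_sq]; nlinarith [norm_nonneg κ]
  rw [Complex.norm_def, Complex.norm_def]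
  exact Real.sqrt_le_sqrt (by nlinarith)

theorem norm_deriv_le_one_sub_sq_of_norm_lt_one {ψ : ℂ → ℂ}
    (hd : DifferentiableOn ℂ ψ (ball 0 1)) (hmaps : Set.MapsTo ψ (ball 0 1) (closedBall 0 1))
    (hψ0 : ‖ψ 0‖ < 1) : ‖deriv ψ 0‖ ≤ 1 - ‖ψ 0‖ ^ 2 := by
  -- Schwarz's lemma for the disk automorphism `χ` moving `κ = ψ 0` to `0`;
  -- its derivative at `0` is `ψ'(0) / (1 - ‖κ‖²)`.
  generalize hκ : ψ 0 = κ at hψ0 ⊢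
  have hden : ∀ z ∈ ball (0 : ℂ) 1, 1 - starRingEnd ℂ κ * ψ z ≠ 0 := by
    intro z hz h
    have : ‖starRingEnd ℂ κ * ψ z‖ < 1 := by
      rw [norm_mul, Complex.norm_conj]
      have := mem_closedBall_zero_iff.mp (hmaps hz)
      nlinarith [norm_nonneg κ, norm_nonneg (ψ z)]
    rw [← sub_eq_zero.mp h, norm_one] at this
    exact this.false
  set χ : ℂ → ℂ := fun z => (ψ z - κ) / (1 - starRingEnd ℂ κ * ψ z)
  have hχd : DifferentiableOn ℂ χ (ball 0 1) := fun z hz =>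
    ((hd z hz).sub_const κ).div (((hd z hz).const_mul _).const_sub 1) (hden z hz)
  have hχmaps : Set.MapsTo χ (ball 0 1) (closedBall (χ 0) 1) := by
    intro z hz
    rw [show χ 0 = 0 by simp [χ, hκ], mem_closedBall_zero_iff, norm_div,
      div_le_one (norm_pos_iff.mpr (hden z hz))]
    exact norm_sub_le_norm_one_sub_conj_mul hψ0 (mem_closedBall_zero_iff.mp (hmaps hz))
  have h0 : (0 : ℂ) ∈ ball (0 : ℂ) 1 := mem_ball_self one_pos
  have hD0 : 1 - starRingEnd ℂ κ * κ = ((1 - ‖κ‖ ^ 2 : ℝ) : ℂ) := by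
    rw [Complex.conj_mul']; push_cast; ring
  have hχ' : HasDerivAt χ (deriv ψ 0 / ((1 - ‖κ‖ ^ 2 : ℝ) : ℂ)) 0 := by
    have hψ' := (hd.differentiableAt (isOpen_ball.mem_nhds h0)).hasDerivAt
    refine ((hψ'.sub_const κ).div ((hψ'.const_mul (starRingEnd ℂ κ)).const_sub 1)
      (hden 0 h0)).congr_deriv ?_
    rw [hκ, sub_self, zero_mul, sub_zero, ← hD0]
    field_simp
  have hpos : 0 < 1 - ‖κ‖ ^ 2 := by nlinarith [norm_nonneg κ]
  have := Complex.norm_deriv_le_one_of_mapsTo_ball hχd hχmaps one_pos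
  rwa [hχ'.deriv, norm_div, Complex.norm_real, Real.norm_of_nonneg hpos.le,
    div_le_one hpos] at this

theorem norm_deriv_le_one_sub_sq_of_mapsTo {ψ : ℂ → ℂ}
    (hd : DifferentiableOn ℂ ψ (ball 0 1)) (hmaps : Set.MapsTo ψ (ball 0 1) (closedBall 0 1)) :
    ‖deriv ψ 0‖ ≤ 1 - ‖ψ 0‖ ^ 2 := by
  have h0 : (0 : ℂ) ∈ ball (0 : ℂ) 1 := mem_ball_self one_pos
  rcases (mem_closedBall_zero_iff.mp (hmaps h0)).lt_or_eq with hlt | heq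
  · exact norm_deriv_le_one_sub_sq_of_norm_lt_one hd hmaps hlt
  · have hmax : IsMaxOn (norm ∘ ψ) (ball 0 1) 0 := fun z hz => by
      simpa [heq] using mem_closedBall_zero_iff.mp (hmaps hz)
    have hconst : ψ =ᶠ[𝓝 0] fun _ => ψ 0 := Filter.eventuallyEq_of_mem (isOpen_ball.mem_nhds h0)
      (Complex.eqOn_of_isPreconnected_of_isMaxOn_norm (convex_ball 0 1).isPreconnected
        isOpen_ball hd h0 hmax)
    simp [hconst.deriv_eq, heq]

theorem norm_iteratedDeriv_two_le_of_mapsTo {u : ℂ → ℂ}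
    (hd : DifferentiableOn ℂ u (ball 0 1)) (hmaps : Set.MapsTo u (ball 0 1) (ball 0 1))
    (hu0 : u 0 = 0) : ‖iteratedDeriv 2 u 0 / 2‖ ≤ 1 - ‖deriv u 0‖ ^ 2 := by
  have hball : ball (0 : ℂ) 1 ∈ 𝓝 0 := isOpen_ball.mem_nhds (mem_ball_self one_pos)
  have hψd : DifferentiableOn ℂ (dslope u 0) (ball 0 1) := (differentiableOn_dslope hball).mpr hd
  have hψmaps : Set.MapsTo (dslope u 0) (ball 0 1) (closedBall 0 1) := fun z hz => by
    rw [mem_closedBall_zero_iff]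
    simpa using Complex.norm_dslope_le_div_of_mapsTo_ball hd
      (by rw [hu0]; exact hmaps.mono_right ball_subset_closedBall) hz
  have hu : u = fun z => z * dslope u 0 z := funext fun z => by
    simpa [hu0] using (sub_smul_dslope u 0 z).symm
  have h2 : iteratedDeriv 2 u 0 / 2 = deriv (dslope u 0) 0 := by
    conv_lhs => rw [hu, iteratedDeriv_succ_id_mul_zero (hψd.analyticAt hball)]
    norm_num
  rw [h2, ← dslope_same u 0]
  exact norm_deriv_le_one_sub_sq_of_mapsTo hψd hψmaps

theorem Subord.congr_left {F F' G : ℂ → ℂ} (hFF' : Set.EqOn F F' unitDisk) (hF : Subord F G) :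
    Subord F' G := by
  obtain ⟨u, hu, hu0, hub, hFu⟩ := hF
  exact ⟨u, hu, hu0, hub, fun z hz => (hFF' hz).symm.trans (hFu z hz)⟩

theorem bazFun_eqOn {F F' : ℂ → ℂ} (γ : ℝ) (hFF' : Set.EqOn F F' unitDisk) :
    Set.EqOn (bazFun γ F) (bazFun γ F') unitDisk := fun z hz => by
  have hderiv : deriv F z = deriv F' z :=
    (Filter.eventuallyEq_of_mem (isOpen_ball.mem_nhds hz) hFF').deriv_eq
  simp only [bazFun, hderiv, hFF' hz]

theorem Dop_zero_zero_eqOn {f : ℂ → ℂ} {a : ℕ → ℂ} (lam al be : ℝ) (hf : IsInA f a) :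
    Set.EqOn (Dop lam al be 0 0 a) f unitDisk := fun z hz => by
  obtain ⟨-, ha0, ha1, hsum⟩ := hf
  have hCdel (n : ℕ) (hn : 1 ≤ n) : Cdel 0 n = 1 := by
    rw [Cdel, add_zero, zero_add, Real.Gamma_one, mul_one,
      div_self (Real.Gamma_pos_of_pos (by exact_mod_cast hn)).ne']
  have hterm : (fun n : ℕ => if 2 ≤ n then
        ((Ups lam al be 0 n : ℝ) : ℂ) * ((Cdel 0 n : ℝ) : ℂ) * a n * z ^ n else 0)
      = fun n => a n * z ^ n - if n = 1 then z else 0 := by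
    funext n
    match n with
    | 0 => simp [ha0]
    | 1 => simp [ha1]
    | n + 2 => simp [Ups, hCdel (n + 2) (by omega)]
  rw [Dop, hterm, ((hsum z hz).sub (hasSum_ite_eq 1 z)).tsum_eq]
  ring

theorem exists_coeff_eq_of_subord {F φ : ℂ → ℂ} {A : ℕ → ℂ} {B : ℕ → ℝ}
    (hφs : ∀ z ∈ unitDisk, HasSum (fun n => (B n : ℂ) * z ^ n) (φ z))
    (hF : IsInA F A) (hne : ∀ z ∈ unitDisk, z ≠ 0 → F z ≠ 0) (hsub : Subord (bazFun 0 F) φ) :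
    ∃ c₁ c₂ : ℂ, ‖c₂‖ ≤ 1 - ‖c₁‖ ^ 2 ∧ A 2 = B 1 * c₁ ∧
      2 * A 3 - A 2 ^ 2 = B 1 * c₂ + B 2 * c₁ ^ 2 := by
  obtain ⟨-, hA0, hA1, hAs⟩ := hF
  obtain ⟨u, hu, hu0, hub, hFu⟩ := hsub
  have h0 : (0 : ℂ) ∈ unitDisk := mem_ball_self one_pos
  have hFser : HasFPowerSeriesAt F (ofScalars ℂ A) 0 :=
    (hasFPowerSeriesOnBall_ofScalars_of_hasSum one_pos
      (by simpa [unitDisk] using hAs)).hasFPowerSeriesAt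
  have hφser : HasFPowerSeriesAt φ (ofScalars ℂ fun n => (B n : ℂ)) 0 :=
    (hasFPowerSeriesOnBall_ofScalars_of_hasSum one_pos
      (by simpa [unitDisk] using hφs)).hasFPowerSeriesAt
  have hF0 : F 0 = 0 := by simpa [hA0] using hFser.iteratedDeriv_eq 0
  have heq : (fun z => z * deriv F z) =ᶠ[𝓝 0] fun z => (φ ∘ u) z * F z := by
    filter_upwards [isOpen_ball.mem_nhds h0] with z hz
    rcases eq_or_ne z 0 with rfl | hz0
    · simp [hF0]
    · have := hFu z hz
      rw [bazFun, if_neg hz0, Complex.ofReal_zero, Complex.cpow_zero, mul_one,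
        div_eq_iff (hne z hz hz0)] at this
      exact this
  have hφu : AnalyticAt ℂ (φ ∘ u) 0 := by
    refine AnalyticAt.comp ?_ (hu 0 h0)
    rw [hu0]
    exact hφser.analyticAt
  obtain ⟨hd1, hd2⟩ := deriv_eq_and_iteratedDeriv_two_eq_of_id_mul_deriv_eq hFser hA0 hA1 hφu heq
  have hφ1 : deriv φ 0 = B 1 := by simpa using hφser.iteratedDeriv_eq 1
  have hφ2 : iteratedDeriv 2 φ 0 = 2 * B 2 := by simpa using hφser.iteratedDeriv_eq 2
  rw [deriv_comp 0 (by rw [hu0]; exact hφser.analyticAt.differentiableAt)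
    (hu 0 h0).differentiableAt, hu0, hφ1] at hd1
  rw [iteratedDeriv_comp_two (by rw [hu0]; exact hφser.analyticAt.contDiffAt)
    (hu 0 h0).contDiffAt, hu0, hφ1, hφ2] at hd2
  refine ⟨deriv u 0, iteratedDeriv 2 u 0 / 2, ?_, hd1.symm, ?_⟩
  · exact norm_iteratedDeriv_two_le_of_mapsTo (fun z hz => (hu z hz).differentiableWithinAt)
      (fun z hz => mem_ball_zero_iff.mpr (hub z hz)) hu0
  · linear_combination -hd2 / 2

theorem le_mul_sqrt_div_sqrt_of_sq_mul_le {x b D : ℝ} (hx : 0 ≤ x) (hb : 0 ≤ b) (hD : 0 < D)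
    (h : x ^ 2 * D ≤ b ^ 3) : x ≤ b * √b / √D := by
  rw [le_div_iff₀ (Real.sqrt_pos.mpr hD), ← Real.sqrt_sq hx, ← Real.sqrt_sq hb,
    ← Real.sqrt_mul (sq_nonneg x), ← Real.sqrt_mul (sq_nonneg b), Real.sqrt_sq hb]
  exact Real.sqrt_le_sqrt (by nlinarith)

theorem norm_sq_mul_abs_le_of_sum_eq {B₁ B₂ : ℝ} {a₂ c₁ c₂ d₂ : ℂ} (hB₁ : 0 < B₁)
    (ha₂ : a₂ = B₁ * c₁) (hsum : 2 * a₂ ^ 2 * (B₁ ^ 2 - B₂ : ℝ) = B₁ ^ 3 * (c₂ + d₂))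
    (hc₂ : ‖c₂‖ ≤ 1 - ‖c₁‖ ^ 2) (hd₂ : ‖d₂‖ ≤ 1 - ‖c₁‖ ^ 2) :
    ‖a₂‖ ^ 2 * |B₁ ^ 2 - (B₂ - B₁)| ≤ B₁ ^ 3 := by
  have hnorm := congrArg norm hsum
  simp only [norm_mul, norm_pow, Complex.norm_real, Complex.norm_ofNat, Real.norm_eq_abs,
    abs_of_pos hB₁] at hnorm
  have ha₂' : ‖a₂‖ = B₁ * ‖c₁‖ := by
    rw [ha₂, norm_mul, Complex.norm_real, Real.norm_of_nonneg hB₁.le]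
  have htri : |B₁ ^ 2 - (B₂ - B₁)| ≤ |B₁ ^ 2 - B₂| + B₁ := by
    simpa [abs_of_pos hB₁, sub_sub_eq_add_sub, add_sub_right_comm] using
      abs_add_le (B₁ ^ 2 - B₂) B₁
  have hcd : ‖c₂ + d₂‖ ≤ 2 - 2 * ‖c₁‖ ^ 2 := by linarith [norm_add_le c₂ d₂]
  calc ‖a₂‖ ^ 2 * |B₁ ^ 2 - (B₂ - B₁)| ≤ ‖a₂‖ ^ 2 * (|B₁ ^ 2 - B₂| + B₁) :=
        mul_le_mul_of_nonneg_left htri (sq_nonneg _)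
    _ = B₁ ^ 3 * ‖c₂ + d₂‖ / 2 + B₁ ^ 3 * ‖c₁‖ ^ 2 := by
        rw [← hnorm, ha₂']; ring
    _ ≤ B₁ ^ 3 * (2 - 2 * ‖c₁‖ ^ 2) / 2 + B₁ ^ 3 * ‖c₁‖ ^ 2 := by gcongr
    _ = B₁ ^ 3 := by ring

theorem norm_le_of_diff_eq {B₁ : ℝ} {a₂ a₃ c₁ c₂ d₂ : ℂ} (hB₁ : 0 ≤ B₁)
    (ha₂ : a₂ = B₁ * c₁) (hdiff : 4 * (a₃ - a₂ ^ 2) = B₁ * (c₂ - d₂))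
    (hc₂ : ‖c₂‖ ≤ 1 - ‖c₁‖ ^ 2) (hd₂ : ‖d₂‖ ≤ 1 - ‖c₁‖ ^ 2) :
    ‖a₃‖ ≤ B₁ / 2 + B₁ ^ 2 := by
  have ha₃ : a₃ = a₂ ^ 2 + B₁ * (c₂ - d₂) / 4 := by linear_combination hdiff / 4
  have ha₂' : ‖a₂‖ = B₁ * ‖c₁‖ := by
    rw [ha₂, norm_mul, Complex.norm_real, Real.norm_of_nonneg hB₁]
  have hcd : ‖c₂ - d₂‖ ≤ 2 - 2 * ‖c₁‖ ^ 2 := by linarith [norm_sub_le c₂ d₂]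
  have hc₁ : ‖c₁‖ ^ 2 ≤ 1 := by linarith [norm_nonneg c₂]
  calc ‖a₃‖ ≤ ‖a₂‖ ^ 2 + B₁ * ‖c₂ - d₂‖ / 4 := by
        rw [ha₃]
        refine (norm_add_le _ _).trans_eq ?_
        rw [norm_pow, norm_div, norm_mul, Complex.norm_real, Real.norm_of_nonneg hB₁]
        norm_num
    _ ≤ B₁ / 2 + B₁ ^ 2 := by
        rw [ha₂']
        nlinarith [mul_le_mul_of_nonneg_left hcd hB₁, mul_le_mul_of_nonneg_left hc₁ (sq_nonneg B₁)]

theorem cor_2_8_general (α β lam : ℝ)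
    (B : ℕ → ℝ) (φ : ℂ → ℂ)
    (hφs : ∀ z ∈ unitDisk, HasSum (fun n => (B n : ℂ) * z ^ n) (φ z))
    (hB1 : 0 < B 1)
    (f g : ℂ → ℂ) (a b : ℕ → ℂ)
    (hmem : MemB lam α β 0 0 0 φ f g a b)
    (hden : B 1 ^ 2 - (B 2 - B 1) ≠ 0) :
    ‖a 2‖ ≤ B 1 * Real.sqrt (B 1) / Real.sqrt |B 1 ^ 2 - (B 2 - B 1)| ∧
    ‖a 3‖ ≤ B 1 / 2 + B 1 ^ 2 := by
  obtain ⟨hf, -, hg, -, -, hb2, hb3, hDf, hDg, hsubf, hsubg⟩ := hmem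
  have hDf' := Dop_zero_zero_eqOn lam α β hf
  have hDg' := Dop_zero_zero_eqOn lam α β hg
  obtain ⟨c₁, c₂, hc₂, ha₂, ha₃⟩ := exists_coeff_eq_of_subord hφs hf
    (fun z hz hz0 => hDf' hz ▸ hDf z hz hz0) (hsubf.congr_left (bazFun_eqOn 0 hDf'))
  obtain ⟨d₁, d₂, hd₂, hb₂, hb₃⟩ := exists_coeff_eq_of_subord hφs hg
    (fun z hz hz0 => hDg' hz ▸ hDg z hz hz0) (hsubg.congr_left (bazFun_eqOn 0 hDg'))
  rw [hb2, hb3] at hb₃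
  have hd₁ : d₁ = -c₁ := mul_left_cancel₀ (Complex.ofReal_ne_zero.mpr hB1.ne') <| by
    linear_combination -hb₂ + hb2 - ha₂
  subst hd₁
  rw [norm_neg] at hd₂
  refine ⟨le_mul_sqrt_div_sqrt_of_sq_mul_le (norm_nonneg _) hB1.le (abs_pos.mpr hden)
    (norm_sq_mul_abs_le_of_sum_eq hB1 ha₂ ?_ hc₂ hd₂),
    norm_le_of_diff_eq hB1.le ha₂ (by linear_combination ha₃ - hb₃) hc₂ hd₂⟩
  push_cast
  linear_combination (B 1 : ℂ) ^ 2 * (ha₃ + hb₃) - 2 * (B 2 : ℂ) * (a 2 + B 1 * c₁) * ha₂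

theorem cor_2_8 (α β lam : ℝ)
    (hα0 : 0 < α) (hα1 : α ≤ 1) (hβ0 : 0 < β) (hβ1 : β ≤ 1)
    (hlam : 0 ≤ lam) 
    (B : ℕ → ℝ) (φ : ℂ → ℂ)
    (hφ : AnalyticOnNhd ℂ φ unitDisk)
    (hφs : ∀ z ∈ unitDisk, HasSum (fun n => (B n : ℂ) * z ^ n) (φ z))
    (hB0 : B 0 = 1) (hB1 : 0 < B 1)
    (f g : ℂ → ℂ) (a b : ℕ → ℂ)
    (hmem : MemB lam α β 0 0 0 φ f g a b)
    (hden : B 1 ^ 2 - (B 2 - B 1) ≠ 0) :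
    ‖a 2‖ ≤ B 1 * Real.sqrt (B 1) / Real.sqrt |B 1 ^ 2 - (B 2 - B 1)| ∧
    ‖a 3‖ ≤ B 1 / 2 + B 1 ^ 2 :=
  cor_2_8_general α β lam B φ hφs hB1 f g a b hmem hden
end
end

section
/- (Corollary 2.9) Suppose k = 0 and δ = 0 (so Υₙ = 1 and C(δ,n) = 1 for all n, and Df = f, Dg = g) and let f(z) = z + Σ_{n≥2} aₙ zⁿ belong to the class B_Σ(1, φ). Assume 3B₁² − 4(B₂−B₁) ≠ 0. Then |a₂| ≤ B₁·√B₁ / √( |3B₁² − 4(B₂−B₁)| ) and |a₃| ≤ B₁/3 + (B₁/2)². -/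
open Complex

noncomputable section

/-!
For `γ = 1` and `k = δ = 0` the operator `D` is the identity and the subordinated function is
just `f'`, so `f' = φ ∘ u` and `g' = φ ∘ v` for Schwarz functions `u`, `v`. Comparing Taylor
coefficients gives `2 a₂ = B₁ u'(0)`, `6 a₃ = 2 B₂ u'(0)² + B₁ u''(0)`, and the same identities
for `g`, whose coefficients are `-a₂` and `2 a₂² - a₃`; hence `v'(0) = -u'(0)`. The sum and the
difference of the two third-coefficient identities, together with the sharp Schwarz-function
bound `|u''(0)| ≤ 2 (1 - |u'(0)|²)` (Schwarz–Pick applied to `u z / z`), give the two estimates.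
-/

open Metric Set Filter Topology ComplexConjugate

theorem norm_sub_le_norm_one_sub_conj_mul_s8 {κ x : ℂ} (hκ : ‖κ‖ ≤ 1) (hx : ‖x‖ ≤ 1) :
    ‖x - κ‖ ≤ ‖1 - conj κ * x‖ := by
  have key : normSq (1 - conj κ * x) - normSq (x - κ) = (1 - normSq κ) * (1 - normSq x) := by
    simp only [normSq_apply, sub_re, sub_im, mul_re, mul_im, one_re, one_im, conj_re, conj_im]
    ring
  have hκ' : normSq κ ≤ 1 := by rw [normSq_eq_norm_sq]; exact pow_le_one₀ (norm_nonneg κ) hκ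
  have hx' : normSq x ≤ 1 := by rw [normSq_eq_norm_sq]; exact pow_le_one₀ (norm_nonneg x) hx
  rw [norm_def, norm_def]
  exact Real.sqrt_le_sqrt (by nlinarith)

theorem norm_deriv_le_one_sub_sq_of_mapsTo_ball {v : ℂ → ℂ}
    (hd : DifferentiableOn ℂ v (ball 0 1)) (hmaps : MapsTo v (ball 0 1) (closedBall 0 1)) :
    ‖deriv v 0‖ ≤ 1 - ‖v 0‖ ^ 2 := by
  have h0 : (0 : ℂ) ∈ ball (0 : ℂ) 1 := mem_ball_self one_pos
  have hv1 : ∀ z ∈ ball (0 : ℂ) 1, ‖v z‖ ≤ 1 := fun z hz => mem_closedBall_zero_iff.mp (hmaps hz)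
  rcases (hv1 0 h0).eq_or_lt with hκ | hκ
  · -- maximum modulus principle: `v` is constant
    have hconst := Complex.eqOn_of_isPreconnected_of_isMaxOn_norm
      (convex_ball (0 : ℂ) 1).isPreconnected isOpen_ball hd h0
      (fun z hz => by simpa [← hκ] using hv1 z hz)
    have hev : v =ᶠ[𝓝 0] fun _ => v 0 := eventually_of_mem (isOpen_ball.mem_nhds h0) hconst
    simp [hev.deriv_eq, hκ]
  · -- compose with the disk automorphism moving `v 0` to `0`
    set D : ℂ → ℂ := fun z => 1 - conj (v 0) * v z
    have hD : ∀ z ∈ ball (0 : ℂ) 1, D z ≠ 0 := by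
      intro z hz hDz
      have : ‖conj (v 0) * v z‖ < 1 := by
        rw [norm_mul, norm_conj]
        exact mul_lt_one_of_nonneg_of_lt_one_left (norm_nonneg _) hκ (hv1 z hz)
      simp [sub_eq_zero.mp hDz |>.symm] at this
    set w : ℂ → ℂ := fun z => (v z - v 0) / D z
    have hwd : DifferentiableOn ℂ w (ball 0 1) :=
      (hd.sub_const _).div ((differentiableOn_const _).sub ((differentiableOn_const _).mul hd)) hD
    have hw : MapsTo w (ball 0 1) (closedBall (w 0) 1) := by
      intro z hz
      simp only [w, sub_self, zero_div, mem_closedBall_zero_iff, norm_div]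
      exact div_le_one_of_le₀ (norm_sub_le_norm_one_sub_conj_mul_s8 hκ.le (hv1 z hz)) (norm_nonneg _)
    have hD0 : D 0 = ((1 - ‖v 0‖ ^ 2 : ℝ) : ℂ) := by simp [D, conj_mul']
    have hvd0 : HasDerivAt v (deriv v 0) 0 :=
      (hd.differentiableAt (isOpen_ball.mem_nhds h0)).hasDerivAt
    have hwd0 : HasDerivAt w (deriv v 0 / D 0) 0 := by
      refine ((hvd0.sub_const (v 0)).div ((hasDerivAt_const _ _).sub (hvd0.const_mul _))
        (hD 0 h0)).congr_deriv ?_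
      change (deriv v 0 * D 0 - (v 0 - v 0) * _) / D 0 ^ 2 = _
      rw [sub_self, zero_mul, sub_zero, sq, mul_div_mul_right _ _ (hD 0 h0)]
    have hpos : 0 < 1 - ‖v 0‖ ^ 2 := sub_pos.mpr (pow_lt_one₀ (norm_nonneg _) hκ two_ne_zero)
    have := Complex.norm_deriv_le_one_of_mapsTo_ball hwd hw one_pos
    rwa [hwd0.deriv, norm_div, hD0, norm_real, Real.norm_of_nonneg hpos.le, div_le_one hpos] at this

theorem norm_deriv_deriv_le_of_mapsTo_ball {u : ℂ → ℂ} (hd : DifferentiableOn ℂ u (ball 0 1))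
    (hmaps : MapsTo u (ball 0 1) (closedBall 0 1)) (hu0 : u 0 = 0) :
    ‖deriv (deriv u) 0‖ ≤ 2 * (1 - ‖deriv u 0‖ ^ 2) := by
  have h0 : ball (0 : ℂ) 1 ∈ 𝓝 0 := isOpen_ball.mem_nhds (mem_ball_self one_pos)
  set v := dslope u 0
  have hvd : DifferentiableOn ℂ v (ball 0 1) := (differentiableOn_dslope h0).mpr hd
  have hvmaps : MapsTo v (ball 0 1) (closedBall 0 1) := fun z hz => by
    simpa using Complex.norm_dslope_le_div_of_mapsTo_ball hd (by rwa [hu0]) hz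
  have hu : u = fun z => z * v z := funext fun z => by
    simpa [hu0] using (sub_smul_dslope u 0 z).symm
  have hva : AnalyticAt ℂ v 0 := hvd.analyticAt h0
  have hderiv : deriv u =ᶠ[𝓝 0] fun z => v z + z * deriv v z := by
    filter_upwards [hva.eventually_analyticAt] with z hz
    simp [hu, hz.differentiableAt]
  have hderiv2 : deriv (deriv u) 0 = 2 * deriv v 0 := by
    simp only [hderiv.deriv_eq, hva.differentiableAt, differentiableAt_fun_id,
      hva.deriv.differentiableAt, DifferentiableAt.fun_mul, deriv_fun_add, deriv_fun_mul,
      deriv_id'', one_mul, zero_mul, add_zero]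
    ring
  rw [hderiv2, norm_mul, Complex.norm_two, ← dslope_same u 0]
  linarith [norm_deriv_le_one_sub_sq_of_mapsTo_ball hvd hvmaps]

section Chain

variable {𝕜 : Type*} [NontriviallyNormedField 𝕜] [CompleteSpace 𝕜]

theorem deriv_and_deriv_deriv_of_eventuallyEq_comp {φ u F : 𝕜 → 𝕜} {z₀ : 𝕜}
    (hφ : AnalyticAt 𝕜 φ (u z₀)) (hu : AnalyticAt 𝕜 u z₀) (hF : F =ᶠ[𝓝 z₀] φ ∘ u) :
    deriv F z₀ = deriv φ (u z₀) * deriv u z₀ ∧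
      deriv (deriv F) z₀ =
        deriv (deriv φ) (u z₀) * deriv u z₀ ^ 2 + deriv φ (u z₀) * deriv (deriv u) z₀ := by
  have hderiv : deriv F =ᶠ[𝓝 z₀] fun z => deriv φ (u z) * deriv u z := by
    filter_upwards [hF.eventuallyEq_nhds, hu.eventually_analyticAt,
      hu.continuousAt.tendsto.eventually hφ.eventually_analyticAt] with z hFz huz hφz
    rw [hFz.deriv_eq, deriv_comp z hφz.differentiableAt huz.differentiableAt]
  refine ⟨hderiv.self_of_nhds, ?_⟩
  rw [hderiv.deriv_eq, deriv_fun_mul (c := fun z => deriv φ (u z))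
    (hφ.deriv.differentiableAt.comp z₀ hu.differentiableAt) hu.deriv.differentiableAt]
  change deriv (deriv φ ∘ u) z₀ * _ + _ = _
  rw [deriv_comp z₀ hφ.deriv.differentiableAt hu.differentiableAt]
  ring

end Chain

theorem hasFPowerSeriesOnBall_ofScalars_of_hasSum_s8 {c : ℕ → ℂ} {F : ℂ → ℂ}
    (h : ∀ z ∈ unitDisk, HasSum (fun n => c n * z ^ n) (F z)) :
    HasFPowerSeriesOnBall F (FormalMultilinearSeries.ofScalars ℂ c) 0 1 where
  r_le := by
    refine ENNReal.le_of_forall_nnreal_lt fun r hr => ?_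
    refine FormalMultilinearSeries.le_radius_of_summable_norm _ ?_
    have hr' : (r : ℂ) ∈ unitDisk := by simpa [unitDisk] using hr
    simpa [FormalMultilinearSeries.ofScalars_norm] using (h _ hr').summable.norm
  r_pos := one_pos
  hasSum {y} hy := by
    have hy' : y ∈ unitDisk := by simpa [unitDisk, ← ofReal_norm] using hy
    simpa [FormalMultilinearSeries.ofScalars_apply_eq, mul_comm] using h y hy'

theorem iteratedDeriv_eq_factorial_mul_of_hasSum {c : ℕ → ℂ} {F : ℂ → ℂ}
    (h : ∀ z ∈ unitDisk, HasSum (fun n => c n * z ^ n) (F z)) (n : ℕ) :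
    iteratedDeriv n F 0 = n.factorial * c n := by
  rw [iteratedDeriv_eq_iteratedFDeriv,
    ← (hasFPowerSeriesOnBall_ofScalars_of_hasSum_s8 h).factorial_smul 1 n]
  simp

theorem Cdel_zero {n : ℕ} (hn : n ≠ 0) : Cdel 0 n = 1 := by
  have hΓ : Real.Gamma n ≠ 0 := (Real.Gamma_pos_of_pos (by positivity)).ne'
  simp [Cdel, hΓ]

theorem Dop_zero_zero_apply (lam al be : ℝ) {a : ℕ → ℂ} {z w : ℂ} (ha0 : a 0 = 0)
    (ha1 : a 1 = 1) (h : HasSum (fun n => a n * z ^ n) w) :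
    Dop lam al be 0 0 a z = w := by
  have htail : HasSum (fun n => if 2 ≤ n then a n * z ^ n else 0) (w - z) := by
    refine (h.sub (hasSum_ite_eq 1 z)).congr_fun fun n => ?_
    match n with
    | 0 => simp [ha0]
    | 1 => simp [ha1]
    | n + 2 => simp
  have hterm : ∀ n : ℕ, (if 2 ≤ n then (Ups lam al be 0 n : ℂ) * (Cdel 0 n : ℂ) * a n * z ^ n
      else 0) = if 2 ≤ n then a n * z ^ n else 0 := fun n => by
    split_ifs with hn
    · simp [Ups, Cdel_zero (by omega : n ≠ 0)]
    · rfl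
  rw [Dop, tsum_congr hterm, htail.tsum_eq]
  ring

theorem bazFun_one_apply {F : ℂ → ℂ} {z : ℂ} (hz : z ≠ 0) (hF : F z ≠ 0) :
    bazFun 1 F z = deriv F z := by
  simp only [bazFun, if_neg hz, ofReal_one, cpow_one]
  field_simp

theorem Subord.congr_left_s8 {F G φ : ℂ → ℂ} (h : Subord F φ) (hFG : EqOn F G unitDisk) :
    Subord G φ := by
  obtain ⟨u, hu, hu0, hub, hF⟩ := h
  exact ⟨u, hu, hu0, hub, fun z hz => (hFG hz).symm.trans (hF z hz)⟩

/-- `c` and `C` are the first two Taylor coefficients `u'(0)` and `u''(0)` of the Schwarz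
function realising the subordination. -/
theorem Subord.exists_deriv_eq {F φ : ℂ → ℂ} (hφ : AnalyticOnNhd ℂ φ unitDisk)
    (h : Subord F φ) :
    ∃ c C : ℂ, ‖C‖ ≤ 2 * (1 - ‖c‖ ^ 2) ∧ deriv F 0 = deriv φ 0 * c ∧
      deriv (deriv F) 0 = deriv (deriv φ) 0 * c ^ 2 + deriv φ 0 * C := by
  obtain ⟨u, hu, hu0, hub, hF⟩ := h
  have h0 : (0 : ℂ) ∈ unitDisk := mem_ball_self one_pos
  have hmaps : MapsTo u (ball 0 1) (closedBall 0 1) := fun z hz =>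
    mem_closedBall_zero_iff.mpr (hub z hz).le
  have hFeq : F =ᶠ[𝓝 0] φ ∘ u := eventually_of_mem (isOpen_ball.mem_nhds h0) hF
  obtain ⟨hF1, hF2⟩ :=
    deriv_and_deriv_deriv_of_eventuallyEq_comp (by rw [hu0]; exact hφ 0 h0) (hu 0 h0) hFeq
  refine ⟨deriv u 0, deriv (deriv u) 0,
    norm_deriv_deriv_le_of_mapsTo_ball hu.differentiableOn hmaps hu0, ?_, ?_⟩
  · rw [hF1, hu0]
  · rw [hF2, hu0]

theorem IsInA.bazFun_one_Dop_eqOn {f : ℂ → ℂ} {a : ℕ → ℂ} (lam al be : ℝ) (hf : IsInA f a)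
    (hne : ∀ z ∈ unitDisk, z ≠ 0 → Dop lam al be 0 0 a z ≠ 0) :
    EqOn (bazFun 1 (Dop lam al be 0 0 a)) (deriv f) unitDisk := by
  obtain ⟨-, ha0, ha1, hsum⟩ := hf
  have hDf : EqOn (Dop lam al be 0 0 a) f unitDisk := fun z hz =>
    Dop_zero_zero_apply lam al be ha0 ha1 (hsum z hz)
  intro z hz
  rcases eq_or_ne z 0 with rfl | hz0
  · simpa [bazFun, ha1] using (iteratedDeriv_eq_factorial_mul_of_hasSum hsum 1).symm
  · rw [bazFun_one_apply hz0 (hne z hz hz0)]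
    exact (hDf.eventuallyEq_of_mem (isOpen_ball.mem_nhds hz)).deriv_eq

theorem exists_coeff_eq_of_subord_bazFun_one {φ f : ℂ → ℂ} {B : ℕ → ℝ} {a : ℕ → ℂ}
    (lam al be : ℝ) (hφ : AnalyticOnNhd ℂ φ unitDisk)
    (hφs : ∀ z ∈ unitDisk, HasSum (fun n => (B n : ℂ) * z ^ n) (φ z)) (hf : IsInA f a)
    (hne : ∀ z ∈ unitDisk, z ≠ 0 → Dop lam al be 0 0 a z ≠ 0)
    (hsub : Subord (bazFun 1 (Dop lam al be 0 0 a)) φ) :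
    ∃ c C : ℂ, ‖C‖ ≤ 2 * (1 - ‖c‖ ^ 2) ∧ 2 * a 2 = B 1 * c ∧
      6 * a 3 = 2 * B 2 * c ^ 2 + B 1 * C := by
  obtain ⟨c, C, hC, hf2, hf3⟩ :=
    (hsub.congr_left_s8 (hf.bazFun_one_Dop_eqOn lam al be hne)).exists_deriv_eq hφ
  have hD n := iteratedDeriv_eq_factorial_mul_of_hasSum hf.2.2.2 n
  have hB n := iteratedDeriv_eq_factorial_mul_of_hasSum hφs n
  have ha2 := hD 2
  have ha3 := hD 3
  have hB1 := hB 1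
  have hB2 := hB 2
  simp only [iteratedDeriv_succ, iteratedDeriv_zero, Nat.factorial] at ha2 ha3 hB1 hB2
  push_cast at ha2 ha3 hB1 hB2
  exact ⟨c, C, hC, by linear_combination -ha2 + hf2 + c * hB1,
    by linear_combination -ha3 + hf3 + c ^ 2 * hB2 + C * hB1⟩

section CoeffBounds

variable {B₁ : ℝ} {a₂ c C D : ℂ}

theorem norm_second_coeff_le {B₂ : ℝ} (hB₁ : 0 < B₁) (hC : ‖C‖ ≤ 2 * (1 - ‖c‖ ^ 2))
    (hD : ‖D‖ ≤ 2 * (1 - ‖c‖ ^ 2)) (hc : 2 * a₂ = B₁ * c)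
    (hsum : a₂ ^ 2 * (12 * B₁ ^ 2 - 16 * B₂) = B₁ ^ 3 * (C + D))
    (hden : 3 * B₁ ^ 2 - 4 * (B₂ - B₁) ≠ 0) :
    ‖a₂‖ ≤ B₁ * √B₁ / √|3 * B₁ ^ 2 - 4 * (B₂ - B₁)| := by
  have hc' : 2 * ‖a₂‖ = B₁ * ‖c‖ := by
    simpa [Complex.norm_real, abs_of_pos hB₁] using congrArg norm hc
  have hsum' : ‖a₂‖ ^ 2 * |12 * B₁ ^ 2 - 16 * B₂| ≤ B₁ ^ 3 * (‖C‖ + ‖D‖) := by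
    have h := congrArg norm hsum
    rw [norm_mul, norm_mul, norm_pow, norm_pow, show (12 * (B₁ : ℂ) ^ 2 - 16 * B₂) =
      ((12 * B₁ ^ 2 - 16 * B₂ : ℝ) : ℂ) by push_cast; ring, Complex.norm_real,
      Complex.norm_real, Real.norm_eq_abs, Real.norm_of_nonneg hB₁.le] at h
    rw [h]
    gcongr
    exact norm_add_le C D
  have htriangle : 4 * |3 * B₁ ^ 2 - 4 * (B₂ - B₁)| ≤ |12 * B₁ ^ 2 - 16 * B₂| + 16 * B₁ := by
    calc 4 * |3 * B₁ ^ 2 - 4 * (B₂ - B₁)| = |(12 * B₁ ^ 2 - 16 * B₂) + 16 * B₁| := by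
          rw [← abs_of_pos (by norm_num : (0 : ℝ) < 4), ← abs_mul]; ring_nf
      _ ≤ |12 * B₁ ^ 2 - 16 * B₂| + 16 * B₁ := by
          simpa [abs_of_pos hB₁] using abs_add_le (12 * B₁ ^ 2 - 16 * B₂) (16 * B₁)
  have hA : 4 * B₁ * ‖a₂‖ ^ 2 = B₁ ^ 3 * ‖c‖ ^ 2 := by
    linear_combination B₁ * (2 * ‖a₂‖ + B₁ * ‖c‖) * hc'
  have hCD : B₁ ^ 3 * (‖C‖ + ‖D‖) ≤ B₁ ^ 3 * (4 * (1 - ‖c‖ ^ 2)) :=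
    mul_le_mul_of_nonneg_left (by linarith) (by positivity)
  have hkey : ‖a₂‖ ^ 2 * |3 * B₁ ^ 2 - 4 * (B₂ - B₁)| ≤ B₁ ^ 3 := by
    linarith [mul_le_mul_of_nonneg_left htriangle (sq_nonneg ‖a₂‖)]
  have hT : 0 < |3 * B₁ ^ 2 - 4 * (B₂ - B₁)| := abs_pos.mpr hden
  rw [le_div_iff₀ (Real.sqrt_pos.mpr hT), ← pow_le_pow_iff_left₀ (by positivity)
    (by positivity) two_ne_zero, mul_pow, mul_pow, Real.sq_sqrt hT.le, Real.sq_sqrt hB₁.le]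
  linarith

theorem norm_third_coeff_le {a₃ : ℂ} (hB₁ : 0 < B₁) (hC : ‖C‖ ≤ 2 * (1 - ‖c‖ ^ 2))
    (hD : ‖D‖ ≤ 2 * (1 - ‖c‖ ^ 2)) (hc : 2 * a₂ = B₁ * c)
    (hdiff : 12 * a₃ = 12 * a₂ ^ 2 + B₁ * (C - D)) :
    ‖a₃‖ ≤ B₁ / 3 + (B₁ / 2) ^ 2 := by
  have hc' : 2 * ‖a₂‖ = B₁ * ‖c‖ := by
    simpa [Complex.norm_real, abs_of_pos hB₁] using congrArg norm hc
  have hdiff' : 12 * ‖a₃‖ ≤ 12 * ‖a₂‖ ^ 2 + B₁ * (‖C‖ + ‖D‖) := by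
    calc 12 * ‖a₃‖ = ‖12 * a₂ ^ 2 + B₁ * (C - D)‖ := by simp [← hdiff]
      _ ≤ ‖12 * a₂ ^ 2‖ + ‖(B₁ : ℂ) * (C - D)‖ := norm_add_le _ _
      _ ≤ 12 * ‖a₂‖ ^ 2 + B₁ * (‖C‖ + ‖D‖) := by
          simp only [norm_mul, norm_pow, Complex.norm_real, Real.norm_of_nonneg hB₁.le]
          gcongr
          · norm_num
          · exact norm_sub_le C D
  have hA : 4 * ‖a₂‖ ^ 2 = B₁ ^ 2 * ‖c‖ ^ 2 := by
    linear_combination (2 * ‖a₂‖ + B₁ * ‖c‖) * hc'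
  have hc1 : ‖c‖ ^ 2 ≤ 1 := by linarith [norm_nonneg C]
  have hCD : B₁ * (‖C‖ + ‖D‖) ≤ B₁ * (4 * (1 - ‖c‖ ^ 2)) :=
    mul_le_mul_of_nonneg_left (by linarith) hB₁.le
  linarith [mul_le_of_le_one_right (sq_nonneg B₁) hc1, mul_nonneg hB₁.le (sq_nonneg ‖c‖)]

end CoeffBounds

theorem cor_2_9_general (α β lam : ℝ)
    (B : ℕ → ℝ) (φ : ℂ → ℂ)
    (hφ : AnalyticOnNhd ℂ φ unitDisk)
    (hφs : ∀ z ∈ unitDisk, HasSum (fun n => (B n : ℂ) * z ^ n) (φ z))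
    (hB1 : 0 < B 1)
    (f g : ℂ → ℂ) (a b : ℕ → ℂ)
    (hmem : MemB lam α β 0 0 1 φ f g a b)
    (hden : 3 * B 1 ^ 2 - 4 * (B 2 - B 1) ≠ 0) :
    ‖a 2‖ ≤ B 1 * Real.sqrt (B 1) / Real.sqrt |3 * B 1 ^ 2 - 4 * (B 2 - B 1)| ∧
    ‖a 3‖ ≤ B 1 / 3 + (B 1 / 2) ^ 2 := by
  obtain ⟨hf, -, hg, -, -, hb2, hb3, hfne, hgne, hfsub, hgsub⟩ := hmem
  obtain ⟨c, C, hC, hc2, hc3⟩ :=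
    exists_coeff_eq_of_subord_bazFun_one lam α β hφ hφs hf hfne hfsub
  obtain ⟨d, D, hD, hd2, hd3⟩ :=
    exists_coeff_eq_of_subord_bazFun_one lam α β hφ hφs hg hgne hgsub
  rw [hb2] at hd2
  rw [hb3] at hd3
  obtain rfl : d = -c :=
    mul_left_cancel₀ (ofReal_ne_zero.mpr hB1.ne') (by linear_combination -hd2 - hc2)
  rw [norm_neg] at hD
  refine ⟨norm_second_coeff_le hB1 hC hD hc2 ?_ hden, norm_third_coeff_le hB1 hC hD hc2 ?_⟩
  · linear_combination (B 1 : ℂ) ^ 2 * (hc3 + hd3) - 4 * B 2 * (B 1 * c + 2 * a 2) * hc2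
  · linear_combination hc3 - hd3

theorem cor_2_9 (α β lam : ℝ)
    (hα0 : 0 < α) (hα1 : α ≤ 1) (hβ0 : 0 < β) (hβ1 : β ≤ 1)
    (hlam : 0 ≤ lam) 
    (B : ℕ → ℝ) (φ : ℂ → ℂ)
    (hφ : AnalyticOnNhd ℂ φ unitDisk)
    (hφs : ∀ z ∈ unitDisk, HasSum (fun n => (B n : ℂ) * z ^ n) (φ z))
    (hB0 : B 0 = 1) (hB1 : 0 < B 1)
    (f g : ℂ → ℂ) (a b : ℕ → ℂ)
    (hmem : MemB lam α β 0 0 1 φ f g a b)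
    (hden : 3 * B 1 ^ 2 - 4 * (B 2 - B 1) ≠ 0) :
    ‖a 2‖ ≤ B 1 * Real.sqrt (B 1) / Real.sqrt |3 * B 1 ^ 2 - 4 * (B 2 - B 1)| ∧
    ‖a 3‖ ≤ B 1 / 3 + (B 1 / 2) ^ 2 :=
  cor_2_9_general α β lam B φ hφ hφs hB1 f g a b hmem hden
end
end

section
/- (Corollary 3.12) Let 0 ≤ ζ < 1 and let f(z) = z + Σ_{n≥2} aₙ zⁿ belong to the class B_Σ(1, ζ). Assume Υ₂ > 0 and Υ₃ > 0. Then |a₂| ≤ √( 2(1−ζ)/(3Υ₃·C(δ,3)) ) and |a₃| ≤ 2(1−ζ)/(3Υ₃·C(δ,3)) + ( (1−ζ)/(Υ₂·C(δ,2)) )². -/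
open Complex

noncomputable section

/-! With `γ = 1` the subordination condition says `(Df)' = φ ∘ u` for a Schwarz function `u`, so
comparing third derivatives at the origin gives `3 Υ₃ C(δ,3) a₃ = 2(1 - ζ) (u''(0)/2 + u'(0)²)`.
Schwarz–Pick applied to `u(z)/z` gives `|u''(0)/2 + u'(0)²| ≤ 1`, which bounds `a₃`. The same
identity for the inverse `g`, whose third coefficient is `2a₂² - a₃`, added to the one for `f`,
bounds `a₂²`. -/

open Metric Filter Set Topology FormalMultilinearSeries ComplexConjugate
open scoped ENNReal NNReal

namespace Complex

theorem norm_sub_div_one_sub_conj_mul_le_one {c z : ℂ} (hc : ‖c‖ < 1) (hz : ‖z‖ ≤ 1) :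
    ‖(z - c) / (1 - conj c * z)‖ ≤ 1 := by
  have hcz : ‖conj c * z‖ < 1 := by
    rw [norm_mul, norm_conj]
    exact (mul_le_of_le_one_right (norm_nonneg c) hz).trans_lt hc
  have hden : 0 < ‖1 - conj c * z‖ :=
    norm_pos_iff.2 (sub_ne_zero.2 fun h => by simp [← h] at hcz)
  have hid : normSq (1 - conj c * z) - normSq (z - c) = (1 - normSq c) * (1 - normSq z) := by
    simp only [normSq_apply, sub_re, sub_im, mul_re, mul_im, one_re, one_im, conj_re, conj_im]
    ring
  have hsq : normSq (z - c) ≤ normSq (1 - conj c * z) := by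
    have : 0 ≤ (1 - normSq c) * (1 - normSq z) := by
      rw [normSq_eq_norm_sq, normSq_eq_norm_sq]
      exact mul_nonneg (by nlinarith [norm_nonneg c]) (by nlinarith [norm_nonneg z])
    linarith
  rw [norm_div, div_le_one hden, norm_def, norm_def]
  exact Real.sqrt_le_sqrt hsq

/-- Schwarz–Pick at the centre of the unit disc. -/
theorem norm_deriv_le_one_sub_norm_sq {v : ℂ → ℂ} (hv : DifferentiableOn ℂ v (ball 0 1))
    (hmaps : MapsTo v (ball 0 1) (closedBall 0 1)) : ‖deriv v 0‖ ≤ 1 - ‖v 0‖ ^ 2 := by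
  have h0 : (0 : ℂ) ∈ ball (0 : ℂ) 1 := mem_ball_self one_pos
  have hv1 : ∀ z ∈ ball (0 : ℂ) 1, ‖v z‖ ≤ 1 := fun z hz => mem_closedBall_zero_iff.1 (hmaps hz)
  rcases (hv1 0 h0).lt_or_eq with hlt | heq
  · set c := v 0
    set w : ℂ → ℂ := fun z => (v z - c) / (1 - conj c * v z)
    have hden : ∀ z ∈ ball (0 : ℂ) 1, 1 - conj c * v z ≠ 0 := fun z hz h => by
      have : ‖conj c * v z‖ < 1 := by
        rw [norm_mul, norm_conj]
        exact (mul_le_of_le_one_right (norm_nonneg c) (hv1 z hz)).trans_lt hlt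
      simp [← sub_eq_zero.1 h] at this
    have hw : DifferentiableOn ℂ w (ball 0 1) :=
      (hv.sub_const c).div ((hv.const_mul _).const_sub 1) hden
    have hwmaps : MapsTo w (ball 0 1) (closedBall (w 0) 1) := fun z hz => by
      simpa [w, c] using norm_sub_div_one_sub_conj_mul_le_one hlt (hv1 z hz)
    have hvd := (hv.differentiableAt (isOpen_ball.mem_nhds h0)).hasDerivAt
    have hwd : HasDerivAt w (deriv v 0 / (1 - conj c * c)) 0 := by
      refine ((hvd.sub_const c).div ((hvd.const_mul (conj c)).const_sub 1)
        (hden 0 h0)).congr_deriv ?_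
      rw [sub_self, zero_mul, sub_zero, sq, mul_div_mul_right _ _ (hden 0 h0)]
    have hpos : 0 < 1 - ‖c‖ ^ 2 := by nlinarith [norm_nonneg c]
    have := norm_deriv_le_one_of_mapsTo_ball hw hwmaps one_pos
    rw [hwd.deriv, conj_mul', norm_div, ← ofReal_pow, ← ofReal_one, ← ofReal_sub, norm_real,
      Real.norm_of_nonneg hpos.le, div_le_one hpos] at this
    exact this
  · have hmax : IsLocalMax (norm ∘ v) 0 :=
      Filter.mem_of_superset (isOpen_ball.mem_nhds h0) fun z hz => (hv1 z hz).trans heq.ge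
    have hconst : v =ᶠ[𝓝 0] fun _ => v 0 := eventually_eq_of_isLocalMax_norm
      (Filter.mem_of_superset (isOpen_ball.mem_nhds h0)
        fun z hz => hv.differentiableAt (isOpen_ball.mem_nhds hz)) hmax
    rw [hconst.deriv_eq, deriv_const, norm_zero, heq]
    norm_num

theorem deriv_dslope_zero {u : ℂ → ℂ} (hu : AnalyticAt ℂ u 0) :
    deriv (dslope u 0) 0 = deriv (deriv u) 0 / 2 := by
  rw [hu.hasFPowerSeriesAt.has_fpower_series_dslope_fslope.deriv]
  change (fslope _).coeff 1 = _
  rw [coeff_fslope, coeff_ofScalars, iteratedDeriv_succ, iteratedDeriv_one]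
  norm_num [Nat.factorial]

theorem norm_deriv_deriv_div_two_add_sq_le_one {u : ℂ → ℂ} (hu : AnalyticOnNhd ℂ u (ball 0 1))
    (h0 : u 0 = 0) (hmaps : MapsTo u (ball 0 1) (closedBall 0 1)) :
    ‖deriv (deriv u) 0 / 2 + deriv u 0 ^ 2‖ ≤ 1 := by
  have hdu : DifferentiableOn ℂ (dslope u 0) (ball 0 1) :=
    (differentiableOn_dslope (isOpen_ball.mem_nhds (mem_ball_self one_pos))).2 hu.differentiableOn
  have hdmaps : MapsTo (dslope u 0) (ball 0 1) (closedBall 0 1) := fun z hz => by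
    simpa using norm_dslope_le_div_of_mapsTo_ball hu.differentiableOn (by rwa [h0]) hz
  have hpick := norm_deriv_le_one_sub_norm_sq hdu hdmaps
  rw [deriv_dslope_zero (hu 0 (mem_ball_self one_pos)), dslope_same] at hpick
  calc ‖deriv (deriv u) 0 / 2 + deriv u 0 ^ 2‖
      ≤ ‖deriv (deriv u) 0 / 2‖ + ‖deriv u 0‖ ^ 2 := by rw [← norm_pow]; exact norm_add_le _ _
    _ ≤ 1 := by linarith

end Complex

theorem deriv_deriv_comp {φ u : ℂ → ℂ} {z : ℂ} (hφ : AnalyticAt ℂ φ (u z)) (hu : AnalyticAt ℂ u z) :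
    deriv (deriv (φ ∘ u)) z =
      deriv (deriv φ) (u z) * deriv u z ^ 2 + deriv φ (u z) * deriv (deriv u) z := by
  have hderiv : deriv (φ ∘ u) =ᶠ[𝓝 z] deriv φ ∘ u * deriv u := by
    filter_upwards [hu.continuousAt.eventually hφ.eventually_analyticAt, hu.eventually_analyticAt]
      with w hφw huw
    exact deriv_comp w hφw.differentiableAt huw.differentiableAt
  have hprod := (hφ.deriv.differentiableAt.hasDerivAt.comp z hu.differentiableAt.hasDerivAt).mul
    hu.deriv.differentiableAt.hasDerivAt
  rw [hderiv.deriv_eq, hprod.deriv, Function.comp_apply]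
  ring

theorem HasFPowerSeriesAt.iteratedDeriv_eq_factorial_mul {𝕜 : Type*} [NontriviallyNormedField 𝕜]
    [CompleteSpace 𝕜] [CharZero 𝕜] {F : 𝕜 → 𝕜} {c : ℕ → 𝕜} {x : 𝕜}
    (h : HasFPowerSeriesAt F (ofScalars 𝕜 c) x) (n : ℕ) :
    iteratedDeriv n F x = n.factorial * c n := by
  have hc := congrFun (ofScalars_series_injective 𝕜 𝕜
    (h.eq_formalMultilinearSeries h.analyticAt.hasFPowerSeriesAt)) n
  rw [hc, mul_div_cancel₀ _ (by exact_mod_cast n.factorial_ne_zero)]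

theorem Cdel_pos {d : ℝ} (hd : 0 ≤ d) {n : ℕ} (hn : 1 ≤ n) : 0 < Cdel d n := by
  have hn' : (0 : ℝ) < n := by exact_mod_cast hn
  exact div_pos (Real.Gamma_pos_of_pos (by linarith))
    (mul_pos (Real.Gamma_pos_of_pos hn') (Real.Gamma_pos_of_pos (by linarith)))

theorem Cdel_succ {d : ℝ} (hd : 0 ≤ d) {n : ℕ} (hn : 1 ≤ n) :
    Cdel d (n + 1) = Cdel d n * ((n + d) / n) := by
  have hn' : (0 : ℝ) < n := by exact_mod_cast hn
  have hΓn := (Real.Gamma_pos_of_pos hn').ne'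
  have hΓd := (Real.Gamma_pos_of_pos (by linarith : 0 < d + 1)).ne'
  rw [Cdel, Cdel, Nat.cast_succ, add_right_comm, Real.Gamma_add_one (by linarith),
    Real.Gamma_add_one hn'.ne']
  field_simp

theorem Cdel_le_pow {d : ℝ} (hd : 0 ≤ d) {n : ℕ} (hn : 1 ≤ n) : Cdel d n ≤ (1 + d) ^ n := by
  induction n, hn using Nat.le_induction with
  | base =>
    rw [Cdel, Nat.cast_one, Real.Gamma_one, one_mul, add_comm, div_self
      (Real.Gamma_pos_of_pos (by linarith)).ne', pow_one]
    linarith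
  | succ n hn ih =>
    have hn' : (1 : ℝ) ≤ n := by exact_mod_cast hn
    have hratio : ((n : ℝ) + d) / n ≤ 1 + d := by
      rw [div_le_iff₀ (by linarith)]
      nlinarith
    rw [Cdel_succ hd hn, pow_succ]
    exact mul_le_mul ih hratio (by positivity) (by positivity)

theorem abs_Ups_le (lam al be : ℝ) (k n : ℕ) :
    |Ups lam al be k n| ≤ (|lam * (al + be - 1)| + 1) ^ k * (2 ^ k) ^ n := by
  have hn : |(n : ℝ) - 1| ≤ 2 ^ n := by
    have : (n : ℝ) + 1 ≤ 2 ^ n := by exact_mod_cast Nat.lt_two_pow_self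
    have := abs_sub (n : ℝ) 1
    rw [Nat.abs_cast, abs_one] at this
    linarith
  rw [Ups, abs_pow, abs_mul, ← pow_mul, mul_comm k n, pow_mul, ← mul_pow]
  exact pow_le_pow_left₀ (by positivity)
    (mul_le_mul (by linarith) hn (abs_nonneg _) (by positivity)) k

/-- `D` multiplies the `n`-th Taylor coefficient by `dMult lam al be d k n`. -/
def dMult (lam al be d : ℝ) (k n : ℕ) : ℝ := if 2 ≤ n then Ups lam al be k n * Cdel d n else 1

theorem abs_dMult_le (lam al be : ℝ) {d : ℝ} (hd : 0 ≤ d) (k n : ℕ) :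
    |dMult lam al be d k n| ≤ (|lam * (al + be - 1)| + 1) ^ k * (2 ^ k * (1 + d)) ^ n := by
  have h1 : 1 ≤ (|lam * (al + be - 1)| + 1) ^ k :=
    one_le_pow₀ (by linarith [abs_nonneg (lam * (al + be - 1))])
  unfold dMult
  split_ifs with hn
  · rw [abs_mul, abs_of_pos (Cdel_pos hd (by omega)), mul_pow, ← mul_assoc]
    exact mul_le_mul (abs_Ups_le lam al be k n) (Cdel_le_pow hd (by omega))
      (Cdel_pos hd (by omega)).le (by positivity)
  · rw [abs_one]
    exact one_le_mul_of_one_le_of_one_le h1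
      (one_le_pow₀ (one_le_mul_of_one_le_of_one_le (one_le_pow₀ one_le_two) (by linarith)))

namespace FormalMultilinearSeries

variable {𝕜 : Type*} [NontriviallyNormedField 𝕜]

theorem le_radius_ofScalars_of_summable {a : ℕ → 𝕜} {z : 𝕜} (h : Summable fun n => a n * z ^ n) :
    (‖z‖₊ : ℝ≥0∞) ≤ (ofScalars 𝕜 a).radius := by
  refine le_radius_of_tendsto _ (l := 0) ?_
  simpa [ofScalars_norm, norm_mul, norm_pow] using h.tendsto_atTop_zero.norm

theorem radius_ofScalars_pos_of_norm_le {a A : ℕ → 𝕜} {K ρ : ℝ} (hρ : 0 < ρ)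
    (hA : ∀ n, ‖A n‖ ≤ K * ρ ^ n * ‖a n‖) (ha : 0 < (ofScalars 𝕜 a).radius) :
    0 < (ofScalars 𝕜 A).radius := by
  obtain ⟨r, hr0, hr⟩ := ENNReal.lt_iff_exists_nnreal_btwn.1 ha
  obtain ⟨C, -, hC⟩ := (ofScalars 𝕜 a).norm_mul_pow_le_of_lt_radius hr
  have hbound : ∀ n, ‖ofScalars 𝕜 A n‖ * ((r / ρ.toNNReal : ℝ≥0) : ℝ) ^ n ≤ |K| * C := fun n => by
    have han := hC n
    rw [ofScalars_norm] at han ⊢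
    rw [NNReal.coe_div, Real.coe_toNNReal _ hρ.le, div_pow]
    calc ‖A n‖ * ((r : ℝ) ^ n / ρ ^ n) ≤ K * ρ ^ n * ‖a n‖ * ((r : ℝ) ^ n / ρ ^ n) := by
          gcongr; exact hA n
      _ = K * (‖a n‖ * (r : ℝ) ^ n) := by field_simp
      _ ≤ |K| * C := mul_le_mul (le_abs_self K) han (by positivity) (abs_nonneg K)
  refine lt_of_lt_of_le ?_ ((ofScalars 𝕜 A).le_radius_of_bound _ hbound)
  simpa using div_pos (pos_iff_ne_zero.2 (by simpa using hr0.ne')) (Real.toNNReal_pos.2 hρ)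

end FormalMultilinearSeries

theorem IsInA.radius_ofScalars_pos {f : ℂ → ℂ} {a : ℕ → ℂ} (hf : IsInA f a) :
    0 < (ofScalars ℂ a).radius := by
  have hhalf : (1 / 2 : ℂ) ∈ unitDisk := by
    rw [unitDisk, mem_ball_zero_iff]; norm_num
  refine lt_of_lt_of_le ?_ (le_radius_ofScalars_of_summable (hf.2.2.2 _ hhalf).summable)
  simp

theorem hasFPowerSeriesAt_Dop {lam al be d : ℝ} {k : ℕ} {f : ℂ → ℂ} {a : ℕ → ℂ} (hd : 0 ≤ d)
    (hf : IsInA f a) :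
    HasFPowerSeriesAt (Dop lam al be d k a)
      (ofScalars ℂ fun n => (dMult lam al be d k n : ℂ) * a n) 0 := by
  set p := ofScalars ℂ fun n => (dMult lam al be d k n : ℂ) * a n
  have hrad : 0 < p.radius := by
    refine radius_ofScalars_pos_of_norm_le (K := (|lam * (al + be - 1)| + 1) ^ k)
      (by positivity : (0 : ℝ) < 2 ^ k * (1 + d)) (fun n => ?_) hf.radius_ofScalars_pos
    rw [norm_mul, norm_real, Real.norm_eq_abs]
    exact mul_le_mul_of_nonneg_right (abs_dMult_le lam al be hd k n) (norm_nonneg _)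
  refine (p.hasFPowerSeriesOnBall hrad).hasFPowerSeriesAt.congr ?_
  filter_upwards [isOpen_eball.mem_nhds (mem_eball_self hrad)] with z hz
  have hsum : HasSum (fun n : ℕ =>
      if 2 ≤ n then (Ups lam al be k n : ℂ) * (Cdel d n : ℂ) * a n * z ^ n else 0)
      (p.sum z - z) := by
    refine ((p.hasSum hz).sub (hasSum_ite_eq 1 z)).congr_fun fun n => ?_
    rw [ofScalars_apply_eq, smul_eq_mul]
    rcases n with _ | _ | n <;> simp [dMult, hf.2.1, hf.2.2.1]
  rw [Dop, hsum.tsum_eq]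
  ring

section Mobius

variable (c : ℂ)

theorem hasDerivAt_one_add_mul_div_one_sub {w : ℂ} (hw : w ≠ 1) :
    HasDerivAt (fun w => (1 + c * w) / (1 - w)) ((1 + c) / (1 - w) ^ 2) w := by
  have hw' : 1 - w ≠ 0 := sub_ne_zero.2 hw.symm
  refine (((hasDerivAt_id' w).const_mul c).const_add 1).div ((hasDerivAt_id' w).const_sub 1) hw'
    |>.congr_deriv ?_
  ring

theorem deriv_one_add_mul_div_one_sub_zero :
    deriv (fun w => (1 + c * w) / (1 - w)) 0 = 1 + c := by
  simp [(hasDerivAt_one_add_mul_div_one_sub c zero_ne_one).deriv]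

theorem deriv_deriv_one_add_mul_div_one_sub_zero :
    deriv (deriv fun w => (1 + c * w) / (1 - w)) 0 = 2 * (1 + c) := by
  have hderiv : deriv (fun w => (1 + c * w) / (1 - w)) =ᶠ[𝓝 0] fun w => (1 + c) / (1 - w) ^ 2 := by
    filter_upwards [eventually_ne_nhds (zero_ne_one' ℂ)] with w hw
    exact (hasDerivAt_one_add_mul_div_one_sub c hw).deriv
  have h : HasDerivAt (fun w : ℂ => (1 + c) / (1 - w) ^ 2) (2 * (1 + c)) 0 := by
    refine ((hasDerivAt_const (0 : ℂ) (1 + c)).div (((hasDerivAt_id' (0 : ℂ)).const_sub 1).pow 2)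
      (by norm_num)).congr_deriv ?_
    norm_num
    ring
  rw [hderiv.deriv_eq, h.deriv]

theorem analyticAt_one_add_mul_div_one_sub_zero :
    AnalyticAt ℂ (fun w => (1 + c * w) / (1 - w)) 0 :=
  (analyticAt_const.add (analyticAt_const.mul analyticAt_id)).div
    (analyticAt_const.sub analyticAt_id) (by norm_num)

end Mobius

theorem bazFun_one_eq_deriv {F : ℂ → ℂ} (hF : deriv F 0 = 1) {z : ℂ} (hz : z ≠ 0 → F z ≠ 0) :
    bazFun 1 F z = deriv F z := by
  rcases eq_or_ne z 0 with rfl | hz0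
  · simp [bazFun, hF]
  · rw [bazFun, if_neg hz0, ofReal_one, cpow_one]
    field_simp [hz hz0]

theorem exists_coeff_three_eq_of_subord {lam al be d : ℝ} {k : ℕ} {f φ : ℂ → ℂ} {a : ℕ → ℂ}
    (hd : 0 ≤ d) (hf : IsInA f a) (hne : ∀ z ∈ unitDisk, z ≠ 0 → Dop lam al be d k a z ≠ 0)
    (hφ : AnalyticAt ℂ φ 0) (hsub : Subord (bazFun 1 (Dop lam al be d k a)) φ) :
    ∃ u : ℂ → ℂ, AnalyticOnNhd ℂ u unitDisk ∧ u 0 = 0 ∧ (∀ z ∈ unitDisk, ‖u z‖ < 1) ∧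
      6 * ((Ups lam al be k 3 * Cdel d 3 : ℝ) : ℂ) * a 3 =
        deriv (deriv φ) 0 * deriv u 0 ^ 2 + deriv φ 0 * deriv (deriv u) 0 := by
  obtain ⟨u, hu, hu0, hub, hueq⟩ := hsub
  have hD := hasFPowerSeriesAt_Dop (lam := lam) (al := al) (be := be) (k := k) hd hf
  have hD1 : deriv (Dop lam al be d k a) 0 = 1 := by
    simpa [dMult, hf.2.2.1] using hD.iteratedDeriv_eq_factorial_mul 1
  have h0 : (0 : ℂ) ∈ unitDisk := mem_ball_self one_pos
  have heq : deriv (Dop lam al be d k a) =ᶠ[𝓝 0] φ ∘ u := by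
    filter_upwards [isOpen_ball.mem_nhds h0] with z hz
    rw [← bazFun_one_eq_deriv hD1 (hne z hz), hueq z hz, Function.comp_apply]
  refine ⟨u, hu, hu0, hub, ?_⟩
  calc 6 * ((Ups lam al be k 3 * Cdel d 3 : ℝ) : ℂ) * a 3
      = iteratedDeriv 3 (Dop lam al be d k a) 0 := by
        rw [hD.iteratedDeriv_eq_factorial_mul 3]
        simp [dMult, Nat.factorial]
        ring
    _ = deriv (deriv (deriv (Dop lam al be d k a))) 0 := by
        rw [iteratedDeriv_succ, iteratedDeriv_succ, iteratedDeriv_one]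
    _ = deriv (deriv (φ ∘ u)) 0 := heq.deriv.deriv_eq
    _ = _ := by rw [deriv_deriv_comp (by rwa [hu0]) (hu 0 h0), hu0]

theorem exists_norm_le_one_coeff_three_eq {lam al be d ζ : ℝ} {k : ℕ} {f : ℂ → ℂ} {a : ℕ → ℂ}
    (hd : 0 ≤ d) (hf : IsInA f a) (hne : ∀ z ∈ unitDisk, z ≠ 0 → Dop lam al be d k a z ≠ 0)
    (hsub : Subord (bazFun 1 (Dop lam al be d k a))
      (fun z : ℂ => (1 + (1 - 2 * (ζ : ℂ)) * z) / (1 - z))) :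
    ∃ s : ℂ, ‖s‖ ≤ 1 ∧
      ((3 * Ups lam al be k 3 * Cdel d 3 : ℝ) : ℂ) * a 3 = ((2 * (1 - ζ) : ℝ) : ℂ) * s := by
  obtain ⟨u, hu, hu0, hub, hcoeff⟩ :=
    exists_coeff_three_eq_of_subord hd hf hne (analyticAt_one_add_mul_div_one_sub_zero _) hsub
  refine ⟨deriv (deriv u) 0 / 2 + deriv u 0 ^ 2, norm_deriv_deriv_div_two_add_sq_le_one hu hu0
    fun z hz => mem_closedBall_zero_iff.2 (hub z hz).le, ?_⟩
  rw [deriv_deriv_one_add_mul_div_one_sub_zero, deriv_one_add_mul_div_one_sub_zero] at hcoeff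
  push_cast at hcoeff ⊢
  linear_combination hcoeff / 2

theorem norm_le_div_of_ofReal_mul_eq {T B : ℝ} (hT : 0 < T) (hB : 0 ≤ B) {x s : ℂ}
    (h : (T : ℂ) * x = B * s) (hs : ‖s‖ ≤ 1) : ‖x‖ ≤ B / T := by
  have hnorm := congrArg norm h
  rw [norm_mul, norm_mul, norm_real, norm_real, Real.norm_of_nonneg hT.le,
    Real.norm_of_nonneg hB] at hnorm
  rw [le_div_iff₀ hT, mul_comm, hnorm]
  exact mul_le_of_le_one_right hB hs

theorem cor_3_12_general (k : ℕ) (α β lam δ : ℝ)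
    (hδ : 0 ≤ δ)
    (ζ : ℝ) (hζ1 : ζ < 1)
    (f g : ℂ → ℂ) (a b : ℕ → ℂ)
    (hmem : MemB lam α β δ k 1 (fun z : ℂ => (1 + (1 - 2 * (ζ : ℂ)) * z) / (1 - z)) f g a b)
    (hΥ3 : 0 < Ups lam α β k 3) :
    ‖a 2‖ ≤ Real.sqrt (2 * (1 - ζ) / (3 * Ups lam α β k 3 * Cdel δ 3)) ∧
    ‖a 3‖ ≤ 2 * (1 - ζ) / (3 * Ups lam α β k 3 * Cdel δ 3) + ((1 - ζ) / (Ups lam α β k 2 * Cdel δ 2)) ^ 2 := by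
  obtain ⟨hfA, -, hgA, -, -, -, hb3, hnea, hneb, hsuba, hsubb⟩ := hmem
  obtain ⟨s, hs, hsa⟩ := exists_norm_le_one_coeff_three_eq hδ hfA hnea hsuba
  obtain ⟨t, ht, htb⟩ := exists_norm_le_one_coeff_three_eq hδ hgA hneb hsubb
  have hT : 0 < 3 * Ups lam α β k 3 * Cdel δ 3 := by
    have := Cdel_pos hδ (n := 3) (by norm_num)
    positivity
  have hB : 0 ≤ 2 * (1 - ζ) := by linarith
  have ha3 := norm_le_div_of_ofReal_mul_eq hT hB hsa hs
  have ha2 := norm_le_div_of_ofReal_mul_eq hT hB (x := a 2 ^ 2) (s := (s + t) / 2)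
    (by rw [hb3] at htb; linear_combination (hsa + htb) / 2)
    (by rw [norm_div, Complex.norm_two, div_le_one two_pos]; linarith [norm_add_le s t])
  constructor
  · exact Real.le_sqrt_of_sq_le (by rwa [norm_pow] at ha2)
  · linarith [sq_nonneg ((1 - ζ) / (Ups lam α β k 2 * Cdel δ 2))]

theorem cor_3_12 (k : ℕ) (α β lam δ : ℝ)
    (hα0 : 0 < α) (hα1 : α ≤ 1) (hβ0 : 0 < β) (hβ1 : β ≤ 1)
    (hlam : 0 ≤ lam) (hδ : 0 ≤ δ)
    (ζ : ℝ) (hζ0 : 0 ≤ ζ) (hζ1 : ζ < 1)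
    (f g : ℂ → ℂ) (a b : ℕ → ℂ)
    (hmem : MemB lam α β δ k 1 (fun z : ℂ => (1 + (1 - 2 * (ζ : ℂ)) * z) / (1 - z)) f g a b)
    (hΥ2 : 0 < Ups lam α β k 2) (hΥ3 : 0 < Ups lam α β k 3) :
    ‖a 2‖ ≤ Real.sqrt (2 * (1 - ζ) / (3 * Ups lam α β k 3 * Cdel δ 3)) ∧
    ‖a 3‖ ≤ 2 * (1 - ζ) / (3 * Ups lam α β k 3 * Cdel δ 3) + ((1 - ζ) / (Ups lam α β k 2 * Cdel δ 2)) ^ 2 :=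
  cor_3_12_general k α β lam δ hδ ζ hζ1 f g a b hmem hΥ3
end
end
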